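/- arXiv:1405.7144 — 3 statements merged into one kernel-verified Lean document; each statement's English description precedes it below -/
import Mathlib

section
/- For an odd integer m ≥ 3 and g(x) = Σ_{k=(m+1)/2}^{m} C(m,k) x^k (1−x)^{m−k}, the second derivative satisfies g''(x) = ((m+1)/2)((m−1)/2) C(m,(m−1)/2) (x(1−x))^{(m−3)/2} (1−2x). Consequently g is strictly convex on (0,1/2) and strictly concave on (1/2,1). -/
/-!
Writing `g` as a sum of Bernstein polynomials `b_{m,k}`, the identity
`b_{m,k+1}' = m (b_{m-1,k} - b_{m-1,k+1})` makes the derivative of the tail sum telescope: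
`g' = m b_{m-1,(m-1)/2}`, which is a multiple of `(x(1-x))^((m-1)/2)`. Differentiating once more
produces the factor `1 - 2x`, whose sign gives convexity on `(0,1/2)` and concavity on `(1/2,1)`.
-/

/-- The majority polynomial: probability that `Bin(m,x) ≥ (m+1)/2`. -/
noncomputable def majPoly (m : ℕ) (x : ℝ) : ℝ :=
  ∑ k ∈ Finset.Icc ((m + 1) / 2) m, (m.choose k : ℝ) * x ^ k * (1 - x) ^ (m - k)

open Polynomial Finset

theorem Nat.succ_mul_succ_mul_choose_middle (s : ℕ) :
    (2 * s + 3) * (2 * s + 2) * (2 * s + 1).choose s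
      = (s + 2) * (s + 1) * (2 * s + 3).choose (s + 1) := by
  have h₁ := Nat.add_one_mul_choose_eq (2 * s + 1) s
  have h₂ := Nat.add_one_mul_choose_eq (2 * s + 2) (s + 1)
  have h₃ := Nat.choose_symm_half (s + 1)
  rw [show 2 * (s + 1) + 1 = 2 * s + 3 by ring] at h₃
  rw [show 2 * s + 1 + 1 = 2 * s + 2 by ring] at h₁
  rw [show 2 * s + 2 + 1 = 2 * s + 3 by ring, h₃] at h₂
  rw [mul_assoc, h₁, ← mul_assoc, h₂]
  ring

namespace bernsteinPolynomial

variable {R : Type*} [CommRing R]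

theorem derivative_sum_Icc (n ν : ℕ) :
    derivative (∑ k ∈ Icc (ν + 1) (n + 1), bernsteinPolynomial R (n + 1) k)
      = (n + 1) * bernsteinPolynomial R n ν := by
  rcases lt_or_ge n ν with hnν | hνn
  · rw [Icc_eq_empty (by omega), sum_empty, map_zero, eq_zero_of_lt R hnν, mul_zero]
  rw [← map_add_right_Icc, sum_map, derivative_sum]
  simp only [addRightEmbedding_apply, derivative_succ, Nat.cast_add, Nat.cast_one,
    add_tsub_cancel_right, ← mul_sum]
  have htel := sum_Icc_sub hνn (bernsteinPolynomial R n)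
  rw [eq_zero_of_lt R n.lt_succ_self, zero_sub, ← neg_eq_iff_eq_neg, ← sum_neg_distrib] at htel
  simp only [neg_sub] at htel
  rw [htel]

theorem sub_succ_middle (s : ℕ) :
    bernsteinPolynomial R (2 * s + 1) s - bernsteinPolynomial R (2 * s + 1) (s + 1)
      = ((2 * s + 1).choose s : R[X]) * (X * (1 - X)) ^ s * (1 - 2 * X) := by
  rw [bernsteinPolynomial, bernsteinPolynomial, Nat.choose_symm_half,
    show 2 * s + 1 - s = s + 1 by omega, show 2 * s + 1 - (s + 1) = s by omega, mul_pow]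
  ring

end bernsteinPolynomial

noncomputable def majPolynomial (m : ℕ) : ℝ[X] :=
  ∑ k ∈ Icc ((m + 1) / 2) m, bernsteinPolynomial ℝ m k

theorem majPoly_eq_eval (m : ℕ) : majPoly m = fun x => (majPolynomial m).eval x := by
  ext x
  simp [majPoly, majPolynomial, bernsteinPolynomial, eval_finsetSum]

theorem deriv_deriv_majPoly (m : ℕ) (x : ℝ) :
    deriv (deriv (majPoly m)) x = (derivative (derivative (majPolynomial m))).eval x := by
  have hderiv (p : ℝ[X]) : deriv (fun x => p.eval x) = fun x => (derivative p).eval x :=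
    funext fun _ => p.deriv
  rw [majPoly_eq_eval, hderiv, hderiv]

theorem derivative_derivative_majPolynomial (s : ℕ) :
    derivative (derivative (majPolynomial (2 * s + 3)))
      = (((s + 2) * (s + 1) * (2 * s + 3).choose (s + 1) : ℕ) : ℝ[X])
          * (X * (1 - X)) ^ s * (1 - 2 * X) := by
  have hfirst : derivative (majPolynomial (2 * s + 3))
      = (2 * s + 3 : ℝ[X]) * bernsteinPolynomial ℝ (2 * s + 2) (s + 1) := by
    rw [majPolynomial, show (2 * s + 3 + 1) / 2 = s + 1 + 1 by omega,
      bernsteinPolynomial.derivative_sum_Icc]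
    push_cast
    ring
  rw [hfirst, derivative_mul, bernsteinPolynomial.derivative_succ,
    show 2 * s + 2 - 1 = 2 * s + 1 by omega, bernsteinPolynomial.sub_succ_middle,
    ← Nat.succ_mul_succ_mul_choose_middle]
  simp only [derivative_add, derivative_mul, derivative_ofNat, derivative_natCast]
  push_cast
  ring

theorem majPoly_second_deriv (m : ℕ) (hm : Odd m) (hm3 : 3 ≤ m) :
    (∀ x ∈ Set.Icc (0:ℝ) 1,
      deriv (deriv (majPoly m)) x
        = ((m + 1 : ℝ) / 2) * ((m - 1 : ℝ) / 2) * (m.choose ((m - 1) / 2) : ℝ)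
            * (x * (1 - x)) ^ ((m - 3) / 2) * (1 - 2 * x)) ∧
    StrictConvexOn ℝ (Set.Ioo (0:ℝ) (1/2)) (majPoly m) ∧
    StrictConcaveOn ℝ (Set.Ioo (1/2 : ℝ) 1) (majPoly m) := by
  obtain ⟨s, rfl⟩ : ∃ s, m = 2 * s + 3 := by
    obtain ⟨t, rfl⟩ := hm
    exact ⟨t - 1, by omega⟩
  set c : ℝ := (s + 2) * (s + 1) * (2 * s + 3).choose (s + 1)
  have hsecond (x : ℝ) :
      deriv (deriv (majPoly (2 * s + 3))) x = c * (x * (1 - x)) ^ s * (1 - 2 * x) := by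
    rw [deriv_deriv_majPoly, derivative_derivative_majPolynomial]
    simp [c]
  have hpos {x : ℝ} (hx : x ∈ Set.Ioo (0 : ℝ) 1) : 0 < c * (x * (1 - x)) ^ s :=
    have : 0 < x * (1 - x) := mul_pos hx.1 (by linarith [hx.2])
    have : 0 < (2 * s + 3).choose (s + 1) := Nat.choose_pos (by omega)
    by positivity
  have hcont : Continuous (majPoly (2 * s + 3)) := majPoly_eq_eval _ ▸ Polynomial.continuous _
  refine ⟨fun x _ => ?_, ?_, ?_⟩
  · rw [hsecond, show (2 * s + 3 - 1) / 2 = s + 1 by omega,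
      show (2 * s + 3 - 3) / 2 = s by omega]
    push_cast
    ring
  · refine strictConvexOn_of_deriv2_pos (convex_Ioo _ _) hcont.continuousOn fun x hx => ?_
    rw [interior_Ioo] at hx
    rw [Function.iterate_succ_apply, Function.iterate_one, hsecond]
    exact mul_pos (hpos ⟨hx.1, by linarith [hx.2]⟩) (by linarith [hx.2])
  · refine strictConcaveOn_of_deriv2_neg (convex_Ioo _ _) hcont.continuousOn fun x hx => ?_
    rw [interior_Ioo] at hx
    rw [Function.iterate_succ_apply, Function.iterate_one, hsecond]
    exact mul_neg_of_pos_of_neg (hpos ⟨by linarith [hx.1], hx.2⟩) (by linarith [hx.1])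
end

section
/- For every n ≥ 1, the central binomial coefficient satisfies C(2n,n) ≥ 4^n · √(2/(π(2n+1))). -/
open scoped Nat

theorem centralBinom_lower_bound (n : ℕ) (hn : 1 ≤ n) :
    (4 : ℝ) ^ n * Real.sqrt (2 / (Real.pi * (2 * n + 1))) ≤ ((2 * n).choose n : ℝ) := by
  have hπ := Real.pi_pos
  have hn1 : (0:ℝ) < 2 * n + 1 := by positivity
  have hW := Real.Wallis.W_le n
  rw [Real.Wallis.W_eq_factorial_ratio] at hW
  set C : ℝ := ((2 * n).choose n : ℝ) with hCdef
  have hCpos : 0 < C := by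
    rw [hCdef]
    exact_mod_cast Nat.choose_pos (Nat.le_mul_of_pos_left n (two_pos))
  have key : C * (n ! : ℝ) ^ 2 = ((2 * n)! : ℝ) := by
    have := Nat.choose_mul_factorial_mul_factorial (Nat.le_mul_of_pos_left n (by norm_num) : n ≤ 2 * n)
    have h2 : 2 * n - n = n := by omega
    rw [h2] at this
    have := congrArg (Nat.cast : ℕ → ℝ) this
    push_cast at this
    rw [← this]; ring
  have hfac : (0:ℝ) < (n ! : ℝ) := by positivity
  -- From Wallis bound: 16^n * (2 / (π * (2n+1))) ≤ C^2
  have hsq : (16:ℝ) ^ n * (2 / (Real.pi * (2 * n + 1))) ≤ C ^ 2 := by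
    rw [div_le_iff₀ (by positivity)] at hW
    have h16 : (2:ℝ) ^ (4 * n) = 16 ^ n := by
      rw [pow_mul]; norm_num
    rw [h16, ← key] at hW
    rw [← mul_div_assoc, div_le_iff₀ (by positivity)]
    nlinarith [pow_pos hfac 4, sq_nonneg ((n ! : ℝ)), hW, hCpos]
  have h4 : (4:ℝ) ^ n * Real.sqrt (2 / (Real.pi * (2 * n + 1)))
      = Real.sqrt ((16:ℝ) ^ n * (2 / (Real.pi * (2 * n + 1)))) := by
    rw [Real.sqrt_mul (by positivity)]
    congr 1
    rw [show (16:ℝ) ^ n = ((4:ℝ) ^ n) ^ 2 by rw [show (16:ℝ) = 4 * 4 by norm_num, mul_pow, sq]]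
    exact (Real.sqrt_sq (by positivity)).symm
  rw [h4]
  calc Real.sqrt ((16:ℝ) ^ n * (2 / (Real.pi * (2 * n + 1))))
      ≤ Real.sqrt (C ^ 2) := Real.sqrt_le_sqrt hsq
    _ = C := Real.sqrt_sq hCpos.le
end

section
/- For odd m ≥ 3, let γ(m) = m C(m−1,(m−1)/2) 2^{−(m−1)} and β(m) = log((m+1)/2)/log(γ(m)). Then 1 < β(m) < 2 for all odd m ≥ 3. -/
lemma aux1 (k : ℕ) (hk : 1 ≤ k) : 16 ^ k ≤ 4 * k * (Nat.centralBinom k) ^ 2 := by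
  induction k with
  | zero => omega
  | succ n ih =>
    have key : (n+1) * Nat.centralBinom (n+1) = 2 * (2*n+1) * Nat.centralBinom n :=
      Nat.succ_mul_centralBinom_succ n
    rcases Nat.eq_zero_or_pos n with rfl | hn
    · simp [Nat.centralBinom]
    · have ih := ih hn
      have hsq : ((n+1) * Nat.centralBinom (n+1))^2 = 4 * (2*n+1)^2 * (Nat.centralBinom n)^2 := by
        rw [key]; ring
      have h1 : 4*n*(n+1) ≤ (2*n+1)^2 := by nlinarith
      have main : 4*n * ((n+1) * 16^(n+1)) ≤ 4*n * ((n+1) * (4*(n+1)*(Nat.centralBinom (n+1))^2)) := by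
        have e : (n+1) * (4*(n+1)*(Nat.centralBinom (n+1))^2) = 4 * (((n+1)*Nat.centralBinom (n+1))^2) := by ring
        rw [e, hsq]
        calc 4*n*((n+1)*16^(n+1)) = 16*(4*n*(n+1)) * 16^n := by ring
          _ ≤ 16*(2*n+1)^2 * 16^n := Nat.mul_le_mul_right _ (Nat.mul_le_mul_left 16 h1)
          _ ≤ 16*(2*n+1)^2 * (4*n*(Nat.centralBinom n)^2) := Nat.mul_le_mul_left _ ih
          _ = 4*n*(4*(4*(2*n+1)^2*(Nat.centralBinom n)^2)) := by ring
      have h2 := Nat.le_of_mul_le_mul_left main (by omega)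
      have h3 := Nat.le_of_mul_le_mul_left h2 (by omega)
      linarith [h3]

lemma aux2 (k : ℕ) (hk : 1 ≤ k) :
    (2*k+1) * Nat.centralBinom k < (k+1) * 4 ^ k := by
  -- (2k+1) * C(2k,k) = (k+1) * C(2k+1,k+1), and 2*C(2k+1,k+1) < 2^(2k+1)
  have habs : (k+1) * (2*k+1).choose (k+1) = (2*k+1) * (2*k).choose k := by
    have h := Nat.add_one_mul_choose_eq (2*k) k
    linarith
  have hmid : 2 * (2*k+1).choose (k+1) < 2^(2*k+1) := by
    have hsum : ∑ i ∈ Finset.range (2*k+2), (2*k+1).choose i = 2^(2*k+1) := by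
      simpa using Nat.sum_range_choose (2*k+1)
    have hsymm : (2*k+1).choose k = (2*k+1).choose (k+1) := by
      have := Nat.choose_symm (show k+1 ≤ 2*k+1 by omega)
      simpa [show 2*k+1-(k+1) = k by omega] using this
    have hsub : ({0, k, k+1} : Finset ℕ) ⊆ Finset.range (2*k+2) := by
      intro i hi; simp at hi; simp; omega
    have htri : ∑ i ∈ ({0, k, k+1} : Finset ℕ), (2*k+1).choose i
        ≤ ∑ i ∈ Finset.range (2*k+2), (2*k+1).choose i :=
      Finset.sum_le_sum_of_subset hsub
    rw [Finset.sum_insert (by simp only [Finset.mem_insert, Finset.mem_singleton]; omega),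
      Finset.sum_insert (by simp only [Finset.mem_singleton]; omega),
      Finset.sum_singleton] at htri
    simp only [Nat.choose_zero_right] at htri
    rw [hsum] at htri
    omega
  calc (2*k+1) * Nat.centralBinom k = (k+1) * (2*k+1).choose (k+1) := by
        rw [habs, Nat.centralBinom_eq_two_mul_choose]
    _ < (k+1) * 4^k := by
        have h4 : (2*k+1).choose (k+1) < 4^k := by
          have h2 : 2 * 4^k = 2^(2*k+1) := by
            rw [pow_succ, pow_mul]; norm_num; ring
          omega
        exact (mul_lt_mul_iff_right₀ (by positivity)).mpr h4

/-- `γ(m) = m · C(m−1,(m−1)/2) · 2^{−(m−1)}`. -/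
noncomputable def gammaMaj (m : ℕ) : ℝ :=
  (m : ℝ) * ((m - 1).choose ((m - 1) / 2) : ℝ) / 2 ^ (m - 1)

/-- `β(m) = log((m+1)/2) / log(γ(m))`. -/
noncomputable def betaMaj (m : ℕ) : ℝ :=
  Real.log ((m + 1 : ℝ) / 2) / Real.log (gammaMaj m)

theorem betaMaj_between_one_and_two (m : ℕ) (hm : Odd m) (hm3 : 3 ≤ m) :
    1 < betaMaj m ∧ betaMaj m < 2 := by
  obtain ⟨k, rfl⟩ : ∃ k, m = 2*k+1 := by
    obtain ⟨j, hj⟩ := hm; exact ⟨j, by omega⟩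
  have hk : 1 ≤ k := by omega
  have hgam : gammaMaj (2*k+1) = (2*k+1 : ℝ) * (Nat.centralBinom k : ℝ) / 4^k := by
    unfold gammaMaj
    rw [show 2*k+1-1 = 2*k from rfl, show (2*k)/2 = k by omega,
      ← Nat.centralBinom_eq_two_mul_choose, show (2:ℝ)^(2*k) = 4^k by
        rw [pow_mul]; norm_num]
    push_cast; ring
  set G := gammaMaj (2*k+1) with hGdef
  have h4pos : (0:ℝ) < 4^k := by positivity
  have hcb : (0:ℝ) < (Nat.centralBinom k : ℝ) := by
    exact_mod_cast Nat.centralBinom_pos k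
  have hGpos : 0 < G := by rw [hgam]; positivity
  have hA : (16:ℝ)^k ≤ 4*k*(Nat.centralBinom k:ℝ)^2 := by
    exact_mod_cast aux1 k hk
  have hB : (2*k+1 : ℝ) * (Nat.centralBinom k : ℝ) < (k+1) * 4^k := by
    exact_mod_cast aux2 k hk
  have h16 : ((4:ℝ)^k)^2 = 16^k := by
    rw [← pow_mul, show (16:ℝ) = 4^2 by norm_num, ← pow_mul]; ring_nf
  have hkR : (1:ℝ) ≤ k := by exact_mod_cast hk
  have hGsq : (k+1 : ℝ) < G^2 := by
    have hG2 : G^2 * 16^k = ((2*k+1:ℝ) * (Nat.centralBinom k:ℝ))^2 := by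
      rw [hgam, div_pow, h16, div_mul_cancel₀]
      positivity
    have h16pos : (0:ℝ) < 16^k := by positivity
    nlinarith [mul_pos h16pos (mul_pos hcb hcb), sq_nonneg ((2*k+1:ℝ)*(Nat.centralBinom k:ℝ))]
  have hG1 : 1 < G := by nlinarith
  have hGlt : G < (k+1 : ℝ) := by
    rw [hgam, div_lt_iff₀ h4pos]; linarith
  have hlogG : 0 < Real.log G := Real.log_pos hG1
  have harg : ((2*k+1 : ℕ) + 1 : ℝ) / 2 = (k+1 : ℝ) := by push_cast; ring
  have hL1 : Real.log G < Real.log ((k+1:ℝ)) := Real.log_lt_log hGpos hGlt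
  have hL2 : Real.log ((k+1:ℝ)) < 2 * Real.log G := by
    have := Real.log_lt_log (by positivity : (0:ℝ) < k+1) hGsq
    rwa [Real.log_pow, Nat.cast_ofNat] at this
  unfold betaMaj
  rw [← hGdef, harg]
  constructor
  · rw [lt_div_iff₀ hlogG]; linarith
  · rw [div_lt_iff₀ hlogG]; linarith
end
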